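/- arXiv:1501.04768 — 4 statements merged into one kernel-verified Lean document; each statement's English description precedes it below -/
import Mathlib

section
/- Every simplicial poset S admits a sign convention: an assignment of incidence numbers [J:I] ∈ {+1, -1} to each pair I < J with |J| = |I| + 1, such that for every pair I < J with |J| = |I| + 2, if J', J'' are the two elements between I and J, then [J:J']·[J':I] + [J:J'']·[J'':I] = 0. -/
/-- A finite poset `S` with a minimal element is *simplicial* (with rank function `rk`)
if for every `I ∈ S` the lower order ideal `{J : J ≤ I}` is isomorphic to the boolean
lattice of subsets of a `rk I`-element set. -/
def IsSimplicialPoset (S : Type*) [Fintype S] [PartialOrder S] [OrderBot S]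
    (rk : S → ℕ) : Prop :=
  ∀ I : S, Nonempty ({J : S // J ≤ I} ≃o Finset (Fin (rk I)))

/-!
Order the rank-one elements (vertices) of `S` by an injective labelling and let `V I` be the
set of vertices below `I`. Inside the boolean lattice below `J`, passing from `I` to a cover
adds exactly one vertex `v`, and we put `[J:I] = (-1)^n`, where `n` counts the vertices of `I`
labelled above `v`: the sign of the ordered simplicial boundary. If `I <₂ J`, then
`V J = V I ∪ {a, b}` and the two chains through `J'` and `J''` add `a` and `b` in the two
possible orders; their exponents agree except for the single comparison of `a` with `b`,
so the two products have opposite signs.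
-/

open Finset

section Inversions

variable {α β : Type*} [DecidableEq α] [LinearOrder β] (f : α → β)

def inversionCount (B A : Finset α) : ℕ :=
  #{p ∈ (B \ A) ×ˢ A | f p.1 < f p.2}

variable {f}

theorem inversionCount_insert {v : α} {A : Finset α} (hv : v ∉ A) :
    inversionCount f (insert v A) A = #{w ∈ A | f v < f w} := by
  rw [inversionCount, insert_sdiff_cancel hv, singleton_product, filter_map, card_map]
  rfl

theorem card_filter_lt_insert {v w : α} {A : Finset α} (hw : w ∉ A) :
    #{u ∈ insert w A | f v < f u} = #{u ∈ A | f v < f u} + if f v < f w then 1 else 0 := by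
  rw [filter_insert]
  split_ifs
  · exact card_insert_of_notMem fun h => hw (mem_filter.mp h).1
  · rfl

theorem neg_one_pow_inversionCount_add (hf : Function.Injective f) {a b : α} {A : Finset α}
    (hab : a ≠ b) (ha : a ∉ A) (hb : b ∉ A) :
    (-1 : ℤ) ^ inversionCount f (insert a (insert b A)) (insert a A) *
          (-1) ^ inversionCount f (insert a A) A +
        (-1) ^ inversionCount f (insert a (insert b A)) (insert b A) *
          (-1) ^ inversionCount f (insert b A) A = 0 := by
  have hb' : b ∉ insert a A := by simp [hab.symm, hb]
  have ha' : a ∉ insert b A := by simp [hab, ha]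
  nth_rw 1 [insert_comm]
  rw [inversionCount_insert hb', inversionCount_insert ha,
    inversionCount_insert ha', inversionCount_insert hb, card_filter_lt_insert ha,
    card_filter_lt_insert hb]
  rcases (hf.ne hab).lt_or_gt with h | h <;> simp [h, h.not_gt, pow_succ] <;> ring

end Inversions

theorem Finset.exists_eq_insert_insert_of_card_eq_add_two {α : Type*} [DecidableEq α]
    {A A' A'' C : Finset α} (hA' : A ⊂ A') (hA'C : A' ⊂ C) (hA'' : A ⊂ A'')
    (hA''C : A'' ⊂ C) (hC : #C = #A + 2) (hne : A' ≠ A'') :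
    ∃ x y, x ≠ y ∧ x ∉ A ∧ y ∉ A ∧
      A' = insert x A ∧ A'' = insert y A ∧ C = insert x (insert y A) := by
  have := card_lt_card hA'; have := card_lt_card hA'C
  have := card_lt_card hA''; have := card_lt_card hA''C
  obtain ⟨x, hx, rfl⟩ := exists_eq_insert_iff.mpr ⟨hA'.subset, by omega⟩
  obtain ⟨y, hy, rfl⟩ := exists_eq_insert_iff.mpr ⟨hA''.subset, by omega⟩
  have hxy : x ≠ y := by rintro rfl; exact hne rfl
  refine ⟨x, y, hxy, hx, hy, rfl, rfl, (eq_of_subset_of_card_le ?_ ?_).symm⟩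
  · exact insert_subset (hA'C.subset (mem_insert_self x A))
      (insert_subset (hA''C.subset (mem_insert_self y A)) (hA'C.subset.trans' (subset_insert x A)))
  · rw [card_insert_of_notMem (by simp [hxy, hx]), card_insert_of_notMem hy, hC]

section SimplicialPoset

variable {S : Type*} [Fintype S] [PartialOrder S] {rk : S → ℕ}

open Classical in
noncomputable def vertexSet (rk : S → ℕ) (K : S) : Finset S :=
  {a | a ≤ K ∧ rk a = 1}

theorem mem_vertexSet {K a : S} : a ∈ vertexSet rk K ↔ a ≤ K ∧ rk a = 1 := by
  simp [vertexSet]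

variable [OrderBot S]

theorem IsSimplicialPoset.natCard_le_eq_two_pow (hS : IsSimplicialPoset S rk) (K : S) :
    Nat.card {L // L ≤ K} = 2 ^ rk K := by
  obtain ⟨ψ⟩ := hS K
  rw [Nat.card_congr ψ.toEquiv, Nat.card_eq_fintype_card, Fintype.card_finset, Fintype.card_fin]

theorem IsSimplicialPoset.card_apply (hS : IsSimplicialPoset S rk) {J K : S}
    (φ : {L // L ≤ J} ≃o Finset (Fin (rk J))) (hK : K ≤ J) :
    #(φ ⟨K, hK⟩) = rk K := by
  have hcard : Nat.card {L // L ≤ K} = 2 ^ #(φ ⟨K, hK⟩) := by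
    rw [← card_Iic_finset, ← Fintype.card_Iic, ← Nat.card_eq_fintype_card]
    exact Nat.card_congr <|
      (Equiv.subtypeSubtypeEquivSubtype (p := (· ≤ J)) fun h => h.trans hK).symm.trans
        (φ.toEquiv.subtypeEquiv fun L => (φ.le_iff_le (x := L) (y := ⟨K, hK⟩)).symm)
  exact Nat.pow_right_injective le_rfl (hcard.symm.trans (hS.natCard_le_eq_two_pow K))

theorem IsSimplicialPoset.vertexSet_eq_image [DecidableEq S] (hS : IsSimplicialPoset S rk)
    {J K : S} (φ : {L // L ≤ J} ≃o Finset (Fin (rk J))) (hK : K ≤ J) :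
    vertexSet rk K = (φ ⟨K, hK⟩).image fun x => (φ.symm {x}).1 := by
  ext a
  rw [mem_vertexSet, mem_image]
  constructor
  · rintro ⟨haK, ha⟩
    obtain ⟨x, hx⟩ := card_eq_one.mp ((hS.card_apply φ (haK.trans hK)).trans ha)
    refine ⟨x, singleton_subset_iff.mp ?_, by rw [← hx, OrderIso.symm_apply_apply]⟩
    exact hx ▸ φ.monotone (Subtype.mk_le_mk.mpr haK)
  · rintro ⟨x, hx, rfl⟩
    refine ⟨?_, ?_⟩
    · exact φ.symm_apply_le.mpr (singleton_subset_iff.mpr hx)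
    · rw [← hS.card_apply φ (φ.symm {x}).2, Subtype.coe_eta, OrderIso.apply_symm_apply,
        card_singleton]

theorem IsSimplicialPoset.exists_vertexSet_eq_insert_insert [DecidableEq S]
    (hS : IsSimplicialPoset S rk) {I J J' J'' : S} (hIJ' : I < J') (hJ'J : J' < J)
    (hIJ'' : I < J'') (hJ''J : J'' < J) (hrk : rk J = rk I + 2) (hne : J' ≠ J'') :
    ∃ a b, a ≠ b ∧ a ∉ vertexSet rk I ∧ b ∉ vertexSet rk I ∧
      vertexSet rk J' = insert a (vertexSet rk I) ∧
      vertexSet rk J'' = insert b (vertexSet rk I) ∧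
      vertexSet rk J = insert a (insert b (vertexSet rk I)) := by
  obtain ⟨φ⟩ := hS J
  have hcard : #(φ ⟨J, le_rfl⟩) = #(φ ⟨I, hIJ'.le.trans hJ'J.le⟩) + 2 := by
    rw [hS.card_apply, hS.card_apply, hrk]
  obtain ⟨x, y, hxy, hx, hy, hJ', hJ'', hJ⟩ := exists_eq_insert_insert_of_card_eq_add_two
    (φ.strictMono (Subtype.mk_lt_mk.mpr hIJ')) (φ.strictMono (Subtype.mk_lt_mk.mpr hJ'J))
    (φ.strictMono (Subtype.mk_lt_mk.mpr hIJ'')) (φ.strictMono (Subtype.mk_lt_mk.mpr hJ''J))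
    hcard (fun h => hne (congrArg Subtype.val (φ.injective h)))
  set g : Fin (rk J) → S := fun x => (φ.symm {x}).1
  have hg : Function.Injective g := fun x y h =>
    singleton_injective (φ.symm.injective (Subtype.ext h))
  rw [hS.vertexSet_eq_image φ hJ'J.le, hS.vertexSet_eq_image φ hJ''J.le,
    hS.vertexSet_eq_image φ le_rfl, hS.vertexSet_eq_image φ (hIJ'.le.trans hJ'J.le),
    hJ', hJ'', hJ]
  simp only [image_insert]
  exact ⟨g x, g y, hg.ne hxy, hg.mem_finset_image.not.mpr hx, hg.mem_finset_image.not.mpr hy,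
    rfl, rfl, rfl⟩

end SimplicialPoset

/-- every simplicial poset admits a sign convention: incidence numbers
`ε J I = [J:I] ∈ {1, -1}` for covering pairs `I <₁ J`, such that for every `I <₂ J`
with the two intermediate elements `J'`, `J''` one has
`[J:J']·[J':I] + [J:J'']·[J'':I] = 0`. -/
theorem exists_sign_convention {S : Type*} [Fintype S] [PartialOrder S] [OrderBot S]
    (rk : S → ℕ) (hS : IsSimplicialPoset S rk) :
    ∃ ε : S → S → ℤ,
      (∀ I J : S, I < J → rk J = rk I + 1 → ε J I = 1 ∨ ε J I = -1) ∧
      (∀ I J J' J'' : S, I < J → rk J = rk I + 2 → J' ≠ J'' →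
        I < J' → J' < J → I < J'' → J'' < J →
        ε J J' * ε J' I + ε J J'' * ε J'' I = 0) := by
  classical
  let f := Fintype.equivFin S
  refine ⟨fun J I => (-1) ^ inversionCount f (vertexSet rk J) (vertexSet rk I),
    fun _ _ _ _ => neg_one_pow_eq_or ℤ _, ?_⟩
  intro I J J' J'' _ hrk hne hIJ' hJ'J hIJ'' hJ''J
  obtain ⟨a, b, hab, ha, hb, hJ', hJ'', hJ⟩ :=
    hS.exists_vertexSet_eq_insert_insert hIJ' hJ'J hIJ'' hJ''J hrk hne
  simpa only [hJ', hJ'', hJ] using neg_one_pow_inversionCount_add f.injective hab ha hb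
end

section
/- In a simplicial poset, any two saturated chains between I and J (with I ≤ J) are connected by a sequence of elementary flips, where an elementary flip replaces a subchain J_k <₁ T₁ <₁ J_{k+2} by J_k <₁ T₂ <₁ J_{k+2} with T₂ the other element between J_k and J_{k+2}. -/
/-- A saturated chain: consecutive elements are covering pairs (rank increases by one). -/
def IsSatChain {S : Type*} [PartialOrder S] (rk : S → ℕ) (c : List S) : Prop :=
  c.Chain' (fun a b => a < b ∧ rk b = rk a + 1)

/-- An elementary flip replaces a length-2 subchain `a <₁ T₁ <₁ b` of a saturated chain
by `a <₁ T₂ <₁ b`, where `T₂` is the other element between `a` and `b`. -/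
def Flip {S : Type*} [PartialOrder S] (rk : S → ℕ) (c₁ c₂ : List S) : Prop :=
  IsSatChain rk c₁ ∧ IsSatChain rk c₂ ∧
    ∃ (l r : List S) (a T₁ T₂ b : S), T₁ ≠ T₂ ∧
      c₁ = l ++ a :: T₁ :: b :: r ∧ c₂ = l ++ a :: T₂ :: b :: r

/-! Below `J` the poset is the boolean lattice `Finset (Fin (rk J))`, in which `rk` becomes
cardinality (count the elements below `T` in two ways), so it suffices to connect saturated chains
in a graded modular lattice. Given two chains `a ⋖ T₁ ⋯ B` and `a ⋖ T₂ ⋯ B` with `T₁ ≠ T₂`,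
modularity makes `T₁ ⊔ T₂ ≤ B` cover both `Tᵢ`; extending `a ⋖ Tᵢ ⋖ T₁ ⊔ T₂` by one common chain
up to `B` gives two chains that differ by a single flip, and induction on the length connects
each of them to the corresponding original chain. -/

open Relation

section SatChain

variable {S : Type*} [PartialOrder S] {rk : S → ℕ}

theorem IsSatChain.le_of_getLast?_eq {c : List S} (h : IsSatChain rk c) {a b : S}
    (hb : c.getLast? = some b) (ha : a ∈ c) : a ≤ b := by
  obtain ⟨l, rfl⟩ := List.getLast?_eq_some_iff.mp hb
  have hlt : (l ++ [b]).Pairwise (· < ·) := List.isChain_iff_pairwise.mp (h.imp fun _ _ h ↦ h.1)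
  rcases List.mem_append.mp ha with ha | ha
  · exact ((List.pairwise_append.mp hlt).2.2 a ha b List.mem_cons_self).le
  · exact (List.mem_singleton.mp ha).le

theorem IsSatChain.rk_eq_of_getLast?_eq {a b : S} {t : List S} (h : IsSatChain rk (a :: t))
    (hb : (a :: t).getLast? = some b) : rk b = rk a + t.length := by
  induction t generalizing a with
  | nil => simp_all
  | cons x t ih =>
    rw [List.getLast?_cons_cons] at hb
    obtain ⟨⟨-, hx⟩, h⟩ := List.isChain_cons_cons.mp h
    rw [ih h hb, hx, List.length_cons]
    omega

theorem IsSatChain.length_eq {a : S} {t₁ t₂ : List S} (h₁ : IsSatChain rk (a :: t₁))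
    (h₂ : IsSatChain rk (a :: t₂)) (hl : (a :: t₁).getLast? = (a :: t₂).getLast?) :
    t₁.length = t₂.length := by
  obtain ⟨b, hb⟩ : ∃ b, (a :: t₁).getLast? = some b :=
    ⟨_, List.getLast?_eq_some_getLast (List.cons_ne_nil _ _)⟩
  have := (h₁.rk_eq_of_getLast?_eq hb).symm.trans (h₂.rk_eq_of_getLast?_eq (hl ▸ hb))
  omega

theorem IsSatChain.cons_of_head?_eq {a : S} {t₁ t₂ : List S} (h₁ : IsSatChain rk (a :: t₁))
    (h₂ : IsSatChain rk t₂) (h : t₁.head? = t₂.head?) : IsSatChain rk (a :: t₂) :=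
  List.isChain_cons.mpr ⟨fun y hy ↦ (List.isChain_cons.mp h₁).1 y (h ▸ hy), h₂⟩

theorem isSatChain_map_iff {β : Type*} [PartialOrder β] {rk' : β → ℕ} (f : β ↪o S)
    (hf : ∀ x, rk (f x) = rk' x) {d : List β} : IsSatChain rk (d.map f) ↔ IsSatChain rk' d := by
  rw [IsSatChain, IsSatChain, List.Chain', List.Chain', List.isChain_map]
  exact List.IsChain.iff fun a b ↦ by rw [f.lt_iff_lt, hf, hf]

theorem Flip.head?_eq {c₁ c₂ : List S} (h : Flip rk c₁ c₂) : c₁.head? = c₂.head? := by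
  obtain ⟨-, -, l, r, a, T₁, T₂, b, -, rfl, rfl⟩ := h
  cases l <;> rfl

theorem Flip.cons {a : S} {t₁ t₂ : List S} (h : Flip rk t₁ t₂) (ha : IsSatChain rk (a :: t₁)) :
    Flip rk (a :: t₁) (a :: t₂) := by
  obtain ⟨-, h₂, l, r, b, T₁, T₂, c, hne, rfl, rfl⟩ := h
  exact ⟨ha, ha.cons_of_head?_eq h₂ (by cases l <;> rfl), a :: l, r, b, T₁, T₂, c, hne, rfl, rfl⟩

theorem Flip.map {β : Type*} [PartialOrder β] {rk' : β → ℕ} (f : β ↪o S)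
    (hf : ∀ x, rk (f x) = rk' x) {d₁ d₂ : List β} (h : Flip rk' d₁ d₂) :
    Flip rk (d₁.map f) (d₂.map f) := by
  obtain ⟨h₁, h₂, l, r, a, T₁, T₂, b, hne, rfl, rfl⟩ := h
  exact ⟨(isSatChain_map_iff f hf).2 h₁, (isSatChain_map_iff f hf).2 h₂, l.map f, r.map f,
    f a, f T₁, f T₂, f b, f.injective.ne hne, by simp, by simp⟩

theorem reflTransGen_flip_cons {a : S} {t₁ t₂ : List S} (h : ReflTransGen (Flip rk) t₁ t₂)
    (ha : IsSatChain rk (a :: t₁)) : ReflTransGen (Flip rk) (a :: t₁) (a :: t₂) := by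
  revert ha
  induction h using ReflTransGen.head_induction_on with
  | refl => exact fun _ ↦ .refl
  | head hflip _ ih =>
    exact fun ha ↦ .head (hflip.cons ha) (ih (ha.cons_of_head?_eq hflip.2.1 hflip.head?_eq))

end SatChain

section Graded

variable {P : Type*}

theorem isSatChain_grade_iff [PartialOrder P] [GradeOrder ℕ P] {c : List P} :
    IsSatChain (grade ℕ) c ↔ c.IsChain (· ⋖ ·) := by
  refine List.IsChain.iff fun a b ↦ ?_
  rw [covBy_iff_lt_covBy_grade (𝕆 := ℕ), Nat.covBy_iff_add_one_eq, eq_comm]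

theorem exists_isSatChain_grade [PartialOrder P] [GradeOrder ℕ P] [LocallyFiniteOrder P]
    {a b : P} (h : a ≤ b) : ∃ t, IsSatChain (grade ℕ) (a :: t) ∧ (a :: t).getLast? = some b := by
  obtain ⟨t, ht, hb⟩ :=
    List.exists_isChain_cons_of_relationReflTransGen (le_iff_reflTransGen_covBy.mp h)
  exact ⟨t, isSatChain_grade_iff.mpr ht, hb ▸ List.getLast?_eq_some_getLast _⟩

theorem CovBy.covBy_sup_of_covBy [Lattice P] [IsModularLattice P] {a b₁ b₂ : P} (h₁ : a ⋖ b₁)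
    (h₂ : a ⋖ b₂) (hne : b₁ ≠ b₂) : b₁ ⋖ b₁ ⊔ b₂ :=
  covBy_sup_of_inf_covBy_right (by rwa [h₁.wcovBy.inf_eq h₂.wcovBy hne])

variable [Lattice P] [IsModularLattice P] [GradeOrder ℕ P] [LocallyFiniteOrder P]

theorem exists_isSatChain_grade_of_covBy {a T₁ T₂ B : P} (h₁ : a ⋖ T₁) (h₂ : a ⋖ T₂)
    (hne : T₁ ≠ T₂) (hB₁ : T₁ ≤ B) (hB₂ : T₂ ≤ B) :
    ∃ U t, IsSatChain (grade ℕ) (T₁ :: U :: t) ∧ IsSatChain (grade ℕ) (T₂ :: U :: t) ∧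
      (U :: t).getLast? = some B := by
  obtain ⟨t, ht, hB⟩ := exists_isSatChain_grade (sup_le hB₁ hB₂)
  refine ⟨T₁ ⊔ T₂, t, ?_, ?_, hB⟩
  · exact isSatChain_grade_iff.mpr <|
      .cons_cons (h₁.covBy_sup_of_covBy h₂ hne) (isSatChain_grade_iff.mp ht)
  · rw [sup_comm] at ht ⊢
    exact isSatChain_grade_iff.mpr <|
      .cons_cons (h₂.covBy_sup_of_covBy h₁ hne.symm) (isSatChain_grade_iff.mp ht)

theorem reflTransGen_flip_grade_cons {a : P} {t₁ t₂ : List P}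
    (h₁ : IsSatChain (grade ℕ) (a :: t₁)) (h₂ : IsSatChain (grade ℕ) (a :: t₂))
    (hl : (a :: t₁).getLast? = (a :: t₂).getLast?) :
    ReflTransGen (Flip (grade ℕ)) (a :: t₁) (a :: t₂) := by
  obtain ⟨n, hn⟩ : ∃ n, t₁.length = n := ⟨_, rfl⟩
  induction n generalizing a t₁ t₂ with
  | zero =>
    have hn₂ : t₂.length = 0 := (h₁.length_eq h₂ hl) ▸ hn
    rw [List.length_eq_zero_iff.mp hn, List.length_eq_zero_iff.mp hn₂]
  | succ n ih =>
    obtain ⟨T₁, s₁, rfl⟩ := List.exists_cons_of_length_eq_add_one hn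
    obtain ⟨T₂, s₂, rfl⟩ :=
      List.exists_cons_of_length_eq_add_one ((h₁.length_eq h₂ hl).symm.trans hn)
    rw [List.getLast?_cons_cons, List.getLast?_cons_cons] at hl
    obtain ⟨B, hB₁⟩ : ∃ B, (T₁ :: s₁).getLast? = some B :=
      ⟨_, List.getLast?_eq_some_getLast (List.cons_ne_nil _ _)⟩
    have hB₂ := hl ▸ hB₁
    have hs₁ : IsSatChain (grade ℕ) (T₁ :: s₁) := h₁.tail
    have hs₂ : IsSatChain (grade ℕ) (T₂ :: s₂) := h₂.tail
    have hn₁ : s₁.length = n := Nat.succ_injective hn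
    by_cases hT : T₁ = T₂
    · subst hT
      exact reflTransGen_flip_cons (ih hs₁ hs₂ hl hn₁) h₁
    obtain ⟨U, t, hU₁, hU₂, hUB⟩ := exists_isSatChain_grade_of_covBy
      (List.isChain_cons_cons.mp (isSatChain_grade_iff.mp h₁)).1
      (List.isChain_cons_cons.mp (isSatChain_grade_iff.mp h₂)).1 hT
      (hs₁.le_of_getLast?_eq hB₁ List.mem_cons_self) (hs₂.le_of_getLast?_eq hB₂ List.mem_cons_self)
    have hUB₁ : (T₁ :: s₁).getLast? = (T₁ :: U :: t).getLast? := by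
      rw [hB₁, List.getLast?_cons_cons, hUB]
    have hUB₂ : (T₂ :: U :: t).getLast? = (T₂ :: s₂).getLast? := by
      rw [hB₂, List.getLast?_cons_cons, hUB]
    have hlen : (U :: t).length = n := (hs₁.length_eq hU₁ hUB₁) ▸ hn₁
    have hc₁ : IsSatChain (grade ℕ) (a :: T₁ :: U :: t) := h₁.cons_of_head?_eq hU₁ rfl
    have hc₂ : IsSatChain (grade ℕ) (a :: T₂ :: U :: t) := h₂.cons_of_head?_eq hU₂ rfl
    have diamond : Flip (grade ℕ) (a :: T₁ :: U :: t) (a :: T₂ :: U :: t) :=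
      ⟨hc₁, hc₂, [], t, a, T₁, T₂, U, hT, rfl, rfl⟩
    exact (reflTransGen_flip_cons (ih hs₁ hU₁ hUB₁ hn₁) h₁).trans <|
      .head diamond (reflTransGen_flip_cons (ih hU₂ hs₂ hUB₂ hlen) hc₂)

theorem reflTransGen_flip_grade {c₁ c₂ : List P} (h₁ : IsSatChain (grade ℕ) c₁)
    (h₂ : IsSatChain (grade ℕ) c₂) (hh : c₁.head? = c₂.head?) (hl : c₁.getLast? = c₂.getLast?) :
    ReflTransGen (Flip (grade ℕ)) c₁ c₂ := by
  cases c₁ with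
  | nil => rw [List.head?_eq_none_iff.mp hh.symm]
  | cons a t₁ =>
    obtain ⟨t₂, rfl⟩ := List.head?_eq_some_iff.mp hh.symm
    exact reflTransGen_flip_grade_cons h₁ h₂ hl

end Graded

section Simplicial

theorem Finset.natCard_subtype_le {β : Type*} (s : Finset β) :
    Nat.card {X // X ≤ s} = 2 ^ s.card := by
  rw [Nat.card_congr (Equiv.subtypeEquivRight fun X ↦ Finset.mem_powerset.symm),
    Nat.card_eq_fintype_card, Fintype.card_coe, Finset.card_powerset]

variable {S : Type*} [Fintype S] [PartialOrder S] [OrderBot S] {rk : S → ℕ}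

theorem IsSimplicialPoset.natCard_subtype_le (hS : IsSimplicialPoset S rk) (T : S) :
    Nat.card {x // x ≤ T} = 2 ^ rk T := by
  obtain ⟨e⟩ := hS T
  rw [Nat.card_congr e.toEquiv, Nat.card_eq_fintype_card, Fintype.card_finset, Fintype.card_fin]

theorem IsSimplicialPoset.rk_eq_card (hS : IsSimplicialPoset S rk) {J : S} {β : Type*}
    (e : {x // x ≤ J} ≃o Finset β) {T : S} (hT : T ≤ J) : rk T = (e ⟨T, hT⟩).card := by
  have hcard : Nat.card {x // x ≤ T} = Nat.card {X // X ≤ e ⟨T, hT⟩} :=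
    Nat.card_congr <| (Equiv.subtypeSubtypeEquivSubtype fun h ↦ h.trans hT).symm.trans <|
      e.toEquiv.subtypeEquiv fun y ↦ (e.le_iff_le (x := y) (y := ⟨T, hT⟩)).symm
  rw [hS.natCard_subtype_le, Finset.natCard_subtype_le] at hcard
  exact Nat.pow_right_injective le_rfl hcard

end Simplicial

theorem satChains_connected_by_flips_general {S : Type*} [Fintype S] [PartialOrder S] [OrderBot S]
    (rk : S → ℕ) (hS : IsSimplicialPoset S rk) (I J : S)
    (c₁ c₂ : List S)
    (h₁ : IsSatChain rk c₁) (h₁h : c₁.head? = some I) (h₁l : c₁.getLast? = some J)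
    (h₂ : IsSatChain rk c₂) (h₂h : c₂.head? = some I) (h₂l : c₂.getLast? = some J) :
    Relation.ReflTransGen (Flip rk) c₁ c₂ := by
  obtain ⟨e⟩ := hS J
  let f : Finset (Fin (rk J)) ↪o S := e.symm.toOrderEmbedding.trans (OrderEmbedding.subtype _)
  have hf : ∀ X, rk (f X) = grade ℕ X := fun X ↦ by
    simpa [f] using hS.rk_eq_card e (e.symm X).2
  have lift : ∀ c, IsSatChain rk c → c.getLast? = some J → c ∈ Set.range (List.map f) := by
    intro c hc hJ
    rw [Set.range_list_map]
    exact fun T hT ↦ ⟨e ⟨T, hc.le_of_getLast?_eq hJ hT⟩, by simp [f]⟩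
  obtain ⟨d₁, rfl⟩ := lift c₁ h₁ h₁l
  obtain ⟨d₂, rfl⟩ := lift c₂ h₂ h₂l
  rw [isSatChain_map_iff f hf] at h₁ h₂
  rw [List.head?_map] at h₁h h₂h
  rw [List.getLast?_map] at h₁l h₂l
  exact ReflTransGen.lift (List.map f) (fun _ _ h ↦ Flip.map f hf h) _ _ <|
    reflTransGen_flip_grade h₁ h₂ (Option.map_injective f.injective (h₁h.trans h₂h.symm))
      (Option.map_injective f.injective (h₁l.trans h₂l.symm))

/-- in a simplicial poset, any two saturated chains between `I` and `J`
are connected by a sequence of elementary flips. -/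
theorem satChains_connected_by_flips {S : Type*} [Fintype S] [PartialOrder S] [OrderBot S]
    (rk : S → ℕ) (hS : IsSimplicialPoset S rk) (I J : S) (hIJ : I ≤ J)
    (c₁ c₂ : List S)
    (h₁ : IsSatChain rk c₁) (h₁h : c₁.head? = some I) (h₁l : c₁.getLast? = some J)
    (h₂ : IsSatChain rk c₂) (h₂h : c₂.head? = some I) (h₂l : c₂.getLast? = some J) :
    Relation.ReflTransGen (Flip rk) c₁ c₂ :=
  satChains_connected_by_flips_general rk hS I J c₁ c₂ h₁ h₁h h₁l h₂ h₂h h₂l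
end

section
/- Let S be a simplicial poset with a sign convention and suppose for each q and each covering pair I <₁ J we have maps m_{I,J} : H_q(I) → H_q(J) (values of a would-be sheaf) such that the total map d¹ = ⊕ m_{I,J} squares to zero, i.e., m_{J',J} ∘ m_{I,J'} + m_{J'',J} ∘ m_{I,J''} = 0 for every square I <₁ J', J'' <₁ J. Define restriction maps along saturated chains by composing the signed maps [J:I]·m_{I,J}. Then the composite along any saturated chain from I to J is independent of the choice of chain, so this defines a cellular sheaf on S. -/
/-- The last element of `a :: c`. -/
def lastD {S : Type*} : List S → S → S
  | [], a => a
  | b :: l, _ => lastD l b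

/-- The composite of the signed maps `[J:I] • m_{I,J}` along a saturated chain
`a <₁ c₀ <₁ c₁ <₁ ⋯`. -/
def compAlong {k : Type*} [CommRing k] {S : Type*}
    (A : S → Type*) [∀ I, AddCommGroup (A I)] [∀ I, Module k (A I)]
    (ε : S → S → ℤ) (m : ∀ I J : S, A I →ₗ[k] A J) :
    (a : S) → (c : List S) → (A a →ₗ[k] A (lastD c a))
  | _, [] => LinearMap.id
  | a, b :: rest => (compAlong A ε m b rest).comp ((ε b a) • m a b)

/-!
In a simplicial poset every interval is boolean, so two saturated chains from `I` that start
with different covers `J'`, `J''` can both be rerouted through the top `K` of the square spanned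
by `J'` and `J''`, followed by one common saturated chain from `K` to the end. Induction on the
length thus reduces independence of the chain to commutation of the signed maps around a square,
which is the sign rule `[K:J'][J':I] = -[K:J''][J'':I]` combined with `d¹ ∘ d¹ = 0` there.
-/

section SatChain

variable {S : Type*} [PartialOrder S] {rk : S → ℕ}

theorem isSatChain_cons_cons {a b : S} {l : List S} :
    IsSatChain rk (a :: b :: l) ↔ (a < b ∧ rk b = rk a + 1) ∧ IsSatChain rk (b :: l) :=
  List.isChain_cons_cons

theorem IsSatChain.le_lastD {a : S} {c : List S} (h : IsSatChain rk (a :: c)) :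
    a ≤ lastD c a := by
  induction c generalizing a with
  | nil => exact le_rfl
  | cons b l ih =>
    rw [isSatChain_cons_cons] at h
    exact h.1.1.le.trans (ih h.2)

theorem IsSatChain.rk_lastD {a : S} {c : List S} (h : IsSatChain rk (a :: c)) :
    rk (lastD c a) = rk a + c.length := by
  induction c generalizing a with
  | nil => rfl
  | cons b l ih =>
    rw [isSatChain_cons_cons] at h
    simp only [lastD, List.length_cons, ih h.2, h.1.2]
    omega

end SatChain

namespace IsSimplicialPoset

variable {S : Type*} [Fintype S] [PartialOrder S] [OrderBot S] {rk : S → ℕ}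

/-- Both sides are `log₂` of the number of elements below `X`. -/
theorem rk_eq_card_s4 (hS : IsSimplicialPoset S rk) {J : S}
    (e : {X : S // X ≤ J} ≃o Finset (Fin (rk J))) (X : {X : S // X ≤ J}) :
    rk X = (e X).card := by
  obtain ⟨f⟩ := hS X
  have hcard_e : Nat.card {Y : S // Y ≤ X.1} = 2 ^ (e X).card :=
    calc Nat.card {Y : S // Y ≤ X.1}
      _ = Nat.card {Y : {Z : S // Z ≤ J} // Y ≤ X} :=
          Nat.card_congr (Equiv.subtypeSubtypeEquivSubtype fun h => h.trans X.2).symm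
      _ = Nat.card {s // s ≤ e X} :=
          Nat.card_congr (e.toEquiv.subtypeEquiv fun _ => e.le_iff_le.symm)
      _ = 2 ^ (e X).card := by
          rw [← Finset.card_Iic_finset, ← Nat.card_eq_finsetCard]
          simp
  have hcard_f : Nat.card {Y : S // Y ≤ X.1} = 2 ^ rk X := by
    rw [Nat.card_congr f.toEquiv, Nat.card_eq_fintype_card, Fintype.card_finset,
      Fintype.card_fin]
  exact Nat.pow_right_injective le_rfl (hcard_f.symm.trans hcard_e)

theorem exists_covBy_le (hS : IsSimplicialPoset S rk) {X J : S} (hXJ : X < J) :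
    ∃ Y, X < Y ∧ rk Y = rk X + 1 ∧ Y ≤ J := by
  obtain ⟨e⟩ := hS J
  let x : {Z // Z ≤ J} := ⟨X, hXJ.le⟩
  obtain ⟨a, -, haX⟩ :=
    Finset.exists_of_ssubset (e.lt_iff_lt.mpr (show x < ⟨J, le_rfl⟩ from hXJ))
  let Y := e.symm (insert a (e x))
  refine ⟨Y.1, ?_, ?_, Y.2⟩
  · show x < Y
    rw [← e.lt_iff_lt, e.apply_symm_apply]
    exact Finset.ssubset_insert haX
  · rw [hS.rk_eq_card_s4 e Y, hS.rk_eq_card_s4 e x, e.apply_symm_apply,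
      Finset.card_insert_of_notMem haX]

theorem exists_satChain (hS : IsSimplicialPoset S rk) {X J : S} (hXJ : X ≤ J) :
    ∃ d, IsSatChain rk (X :: d) ∧ lastD d X = J := by
  induction X using WellFoundedGT.induction with
  | _ X ih =>
  rcases hXJ.eq_or_lt with rfl | hlt
  · exact ⟨[], List.isChain_singleton _, rfl⟩
  · obtain ⟨Y, hXY, hrY, hYJ⟩ := hS.exists_covBy_le hlt
    obtain ⟨d, hd, rfl⟩ := ih Y hXY hYJ
    exact ⟨Y :: d, isSatChain_cons_cons.mpr ⟨⟨hXY, hrY⟩, hd⟩, rfl⟩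

/-- The top of the square is the union of the boolean models of `J'` and `J''`. -/
theorem exists_square (hS : IsSimplicialPoset S rk) {I J' J'' J : S} (hne : J' ≠ J'')
    (hIJ' : I < J') (hIJ'' : I < J'') (hr' : rk J' = rk I + 1) (hr'' : rk J'' = rk I + 1)
    (hJ' : J' ≤ J) (hJ'' : J'' ≤ J) :
    ∃ K, J' < K ∧ J'' < K ∧ rk K = rk I + 2 ∧ K ≤ J := by
  classical
  obtain ⟨e⟩ := hS J
  let i : {Z // Z ≤ J} := ⟨I, hIJ'.le.trans hJ'⟩
  let j' : {Z // Z ≤ J} := ⟨J', hJ'⟩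
  let j'' : {Z // Z ≤ J} := ⟨J'', hJ''⟩
  have hci : rk I = (e i).card := hS.rk_eq_card_s4 e i
  have hc' : rk J' = (e j').card := hS.rk_eq_card_s4 e j'
  have hc'' : rk J'' = (e j'').card := hS.rk_eq_card_s4 e j''
  have hinter_ne : e j' ∩ e j'' ≠ e j' := fun h => hne <| congrArg Subtype.val <| e.injective <|
    Finset.eq_of_subset_of_card_le (Finset.inter_eq_left.mp h) (by omega)
  have hinter : (e j' ∩ e j'').card = (e i).card := by
    have hlow := Finset.card_le_card
      (Finset.subset_inter (e.monotone (show i ≤ j' from hIJ'.le))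
        (e.monotone (show i ≤ j'' from hIJ''.le)))
    have hup := Finset.card_lt_card (Finset.inter_subset_left.ssubset_of_ne hinter_ne)
    omega
  obtain ⟨K, hK⟩ : ∃ K, e K = e j' ∪ e j'' := e.surjective _
  have hrK : rk K = rk I + 2 := by
    have := Finset.card_union_add_card_inter (e j') (e j'')
    rw [hS.rk_eq_card_s4 e K, hK]
    omega
  have hj'K : j' ≤ K := e.le_iff_le.mp (hK ▸ Finset.subset_union_left)
  have hj''K : j'' ≤ K := e.le_iff_le.mp (hK ▸ Finset.subset_union_right)
  refine ⟨K.1, lt_of_le_of_ne hj'K ?_, lt_of_le_of_ne hj''K ?_, hrK, K.2⟩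
  · rintro rfl; omega
  · rintro rfl; omega

end IsSimplicialPoset

section ChainIndependence

variable {k : Type*} [CommRing k]

theorem LinearMap.zsmul_comp_zsmul_eq_of_add_eq_zero {M N N' P : Type*}
    [AddCommGroup M] [AddCommGroup N] [AddCommGroup N'] [AddCommGroup P]
    [Module k M] [Module k N] [Module k N'] [Module k P]
    {a a' b b' : ℤ} {f : M →ₗ[k] N} {g : N →ₗ[k] P} {f' : M →ₗ[k] N'} {g' : N' →ₗ[k] P}
    (hsign : b * a + b' * a' = 0) (hmap : g.comp f + g'.comp f' = 0) :
    (b • g).comp (a • f) = (b' • g').comp (a' • f') := by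
  rw [LinearMap.smul_comp, LinearMap.comp_smul, LinearMap.smul_comp, LinearMap.comp_smul,
    smul_smul, smul_smul, eq_neg_of_add_eq_zero_left hsign, eq_neg_of_add_eq_zero_left hmap,
    neg_smul, smul_neg, neg_neg]

variable {S : Type*} (A : S → Type*) [∀ I, AddCommGroup (A I)] [∀ I, Module k (A I)]

theorem LinearMap.comp_heq_comp {B C C' D : S} (h : C = C') {f : A B →ₗ[k] A C}
    {g : A B →ₗ[k] A C'} (hfg : HEq f g) (p : A D →ₗ[k] A B) : HEq (f.comp p) (g.comp p) := by
  subst h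
  rw [eq_of_heq hfg]

variable [Fintype S] [PartialOrder S] [OrderBot S] {rk : S → ℕ}
  (ε : S → S → ℤ) (m : ∀ I J : S, A I →ₗ[k] A J)

theorem compAlong_heq_of_squares_commute (hS : IsSimplicialPoset S rk)
    (hcomm : ∀ I J' J'' K : S, J' ≠ J'' → I < J' → J' < K → I < J'' → J'' < K →
      rk J' = rk I + 1 → rk J'' = rk I + 1 → rk K = rk I + 2 →
      (ε K J' • m J' K).comp (ε J' I • m I J') = (ε K J'' • m J'' K).comp (ε J'' I • m I J''))
    (n : ℕ) (I : S) (c₁ c₂ : List S) (hl₁ : c₁.length = n) (hl₂ : c₂.length = n)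
    (h₁ : IsSatChain rk (I :: c₁)) (h₂ : IsSatChain rk (I :: c₂))
    (hlast : lastD c₁ I = lastD c₂ I) :
    HEq (compAlong A ε m I c₁) (compAlong A ε m I c₂) := by
  induction n generalizing I c₁ c₂ with
  | zero =>
    rw [List.length_eq_zero_iff] at hl₁ hl₂
    subst hl₁ hl₂
    rfl
  | succ n ih =>
    obtain ⟨J', t₁, rfl⟩ := List.exists_cons_of_length_eq_add_one hl₁
    obtain ⟨J'', t₂, rfl⟩ := List.exists_cons_of_length_eq_add_one hl₂
    simp only [List.length_cons, Nat.add_right_cancel_iff] at hl₁ hl₂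
    obtain ⟨⟨hIJ', hrJ'⟩, h₁⟩ := isSatChain_cons_cons.mp h₁
    obtain ⟨⟨hIJ'', hrJ''⟩, h₂⟩ := isSatChain_cons_cons.mp h₂
    change lastD t₁ J' = lastD t₂ J'' at hlast
    by_cases hJ : J' = J''
    · subst hJ
      exact LinearMap.comp_heq_comp A hlast (ih J' t₁ t₂ hl₁ hl₂ h₁ h₂ hlast) _
    obtain ⟨K, hJ'K, hJ''K, hrK, hKJ⟩ := hS.exists_square hJ hIJ' hIJ'' hrJ' hrJ''
      h₁.le_lastD (hlast ▸ h₂.le_lastD)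
    obtain ⟨d, hd, hdJ⟩ := hS.exists_satChain hKJ
    have hld : (K :: d).length = n := by
      have hrd := hd.rk_lastD
      have hr₁ := h₁.rk_lastD
      rw [hdJ] at hrd
      simp only [List.length_cons]
      omega
    have hK₁ : IsSatChain rk (J' :: K :: d) := isSatChain_cons_cons.mpr ⟨⟨hJ'K, by omega⟩, hd⟩
    have hK₂ : IsSatChain rk (J'' :: K :: d) := isSatChain_cons_cons.mpr ⟨⟨hJ''K, by omega⟩, hd⟩
    have hsquare : (compAlong A ε m J' (K :: d)).comp (ε J' I • m I J') =
        (compAlong A ε m J'' (K :: d)).comp (ε J'' I • m I J'') := by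
      change ((compAlong A ε m K d).comp _).comp _ = ((compAlong A ε m K d).comp _).comp _
      rw [LinearMap.comp_assoc, LinearMap.comp_assoc,
        hcomm I J' J'' K hJ hIJ' hJ'K hIJ'' hJ''K hrJ' hrJ'' hrK]
    exact
      (LinearMap.comp_heq_comp A hdJ.symm (ih J' t₁ (K :: d) hl₁ hld h₁ hK₁ hdJ.symm) _).trans
      ((heq_of_eq hsquare).trans (LinearMap.comp_heq_comp A (hdJ.trans hlast)
        (ih J'' (K :: d) t₂ hld hl₂ hK₂ h₂ (hdJ.trans hlast)) _))

end ChainIndependence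

theorem compAlong_independent_of_chain_general {k : Type*} [CommRing k]
    {S : Type*} [Fintype S] [PartialOrder S] [OrderBot S]
    (rk : S → ℕ) (hS : IsSimplicialPoset S rk)
    (A : S → Type*) [∀ I, AddCommGroup (A I)] [∀ I, Module k (A I)]
    (ε : S → S → ℤ)
    (hsign2 : ∀ I J J' J'' : S, I < J → rk J = rk I + 2 → J' ≠ J'' →
      I < J' → J' < J → I < J'' → J'' < J →
      ε J J' * ε J' I + ε J J'' * ε J'' I = 0)
    (m : ∀ I J : S, A I →ₗ[k] A J)
    (hsquare : ∀ I J' J'' J : S, J' ≠ J'' →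
      I < J' → J' < J → I < J'' → J'' < J →
      rk J' = rk I + 1 → rk J = rk J' + 1 → rk J'' = rk I + 1 →
      (m J' J).comp (m I J') + (m J'' J).comp (m I J'') = 0)
    (I J : S) (c₁ c₂ : List S)
    (h₁ : IsSatChain rk (I :: c₁)) (h₂ : IsSatChain rk (I :: c₂))
    (e₁ : lastD c₁ I = J) (e₂ : lastD c₂ I = J) :
    (e₁ ▸ compAlong A ε m I c₁ : A I →ₗ[k] A J) = e₂ ▸ compAlong A ε m I c₂ := by
  subst e₁
  have hlen : c₂.length = c₁.length := by
    have hr₁ := h₁.rk_lastD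
    have hr₂ := h₂.rk_lastD
    rw [e₂] at hr₂
    omega
  have hcomm := fun I J' J'' K hne hIJ' hJ'K hIJ'' hJ''K hr' hr'' hrK =>
    LinearMap.zsmul_comp_zsmul_eq_of_add_eq_zero (k := k)
      (hsign2 I K J' J'' (hIJ'.trans hJ'K) hrK hne hIJ' hJ'K hIJ'' hJ''K)
      (hsquare I J' J'' K hne hIJ' hJ'K hIJ'' hJ''K hr' (by omega) hr'')
  rw [eq_comm, eqRec_eq_cast, cast_eq_iff_heq]
  exact compAlong_heq_of_squares_commute A ε m hS hcomm _ I c₂ c₁ hlen rfl h₂ h₁ e₂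

/-- given maps `m_{I,J}` on covering pairs whose total first differential
squares to zero (i.e. `m_{J',J} ∘ m_{I,J'} + m_{J'',J} ∘ m_{I,J''} = 0` on every square),
and a sign convention `ε`, the composite of the signed maps `[J:I] • m_{I,J}` along a
saturated chain from `I` to `J` does not depend on the choice of the chain; hence these
composites define a cellular sheaf on `S`. -/
theorem compAlong_independent_of_chain {k : Type*} [CommRing k]
    {S : Type*} [Fintype S] [PartialOrder S] [OrderBot S]
    (rk : S → ℕ) (hS : IsSimplicialPoset S rk)
    (A : S → Type*) [∀ I, AddCommGroup (A I)] [∀ I, Module k (A I)]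
    (ε : S → S → ℤ)
    (hsign1 : ∀ I J : S, I < J → rk J = rk I + 1 → ε J I = 1 ∨ ε J I = -1)
    (hsign2 : ∀ I J J' J'' : S, I < J → rk J = rk I + 2 → J' ≠ J'' →
      I < J' → J' < J → I < J'' → J'' < J →
      ε J J' * ε J' I + ε J J'' * ε J'' I = 0)
    (m : ∀ I J : S, A I →ₗ[k] A J)
    (hsquare : ∀ I J' J'' J : S, J' ≠ J'' →
      I < J' → J' < J → I < J'' → J'' < J →
      rk J' = rk I + 1 → rk J = rk J' + 1 → rk J'' = rk I + 1 →
      (m J' J).comp (m I J') + (m J'' J).comp (m I J'') = 0)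
    (I J : S) (c₁ c₂ : List S)
    (h₁ : IsSatChain rk (I :: c₁)) (h₂ : IsSatChain rk (I :: c₂))
    (e₁ : lastD c₁ I = J) (e₂ : lastD c₂ I = J) :
    (e₁ ▸ compAlong A ε m I c₁ : A I →ₗ[k] A J) = e₂ ▸ compAlong A ε m I c₂ :=
  compAlong_independent_of_chain_general rk hS A ε hsign2 m hsquare I J c₁ c₂ h₁ h₂ e₁ e₂
end

section
/- Let V be a free k-module of rank m with basis ν₁,…,ν_m, and let J ⊆ [m] be nonempty. For I ⊆ J nonempty let Π_I ⊆ Λ[V] be the principal ideal generated by ⋀_{i∈I} ν_i, and let I(J) ⊆ Λ[V] be the ideal generated by the elements ν_j for j ∈ J. Then the sequence 0 ← I(J) ← ⊕_{I⊆J,|I|=1} Π_I ← ⊕_{I⊆J,|I|=2} Π_I ← ⋯ ← ⊕_{I⊆J,|I|=|J|} Π_I ← 0, with differentials given by signed inclusion maps Π_I ↪ Π_{I'} for I' ⊂ I with |I| = |I'|+1 (signs given by a standard simplicial sign convention), and augmentation given by the sum of inclusions Π_{{j}} ↪ I(J), is exact. -/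
/-!
The wedges `e_T = ⋀_{t ∈ T} ν_t` form a basis of `Λ[V]`, in which `Π_I` is spanned by the `e_T`
with `I ⊆ T` and `I(J)` by those with `T ∩ J ≠ ∅`. The differential is a signed sum of inclusions,
so it preserves `e_T`-coordinates and the complex splits, over `T`, into augmented cochain
complexes of the full simplex on `T ∩ J` with coefficients in `k`. For `T ∩ J ≠ ∅` each of these
is contracted by coning off the vertex `a = min (T ∩ J)`, `c ↦ (I ↦ [a ∈ I] c (I \ {a}))`, which
needs no sign since `a` precedes all other vertices.
-/

open scoped Classical

/-- The wedge product `⋀_{i ∈ A} ν i` of the vectors indexed by a finite set `A`,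
taken in increasing order of indices. -/
noncomputable def wedgeOf {k V : Type*} [CommRing k] [AddCommGroup V] [Module k V]
    {m : ℕ} (ν : Fin m → V) (A : Finset (Fin m)) : ExteriorAlgebra k V :=
  ((A.sort (· ≤ ·)).map fun i => ExteriorAlgebra.ι k (ν i)).prod

/-- `Π_I`: the principal ideal of the exterior algebra generated by the wedge of the
basis vectors indexed by `I`. -/
noncomputable def PiIdeal {k V : Type*} [CommRing k] [AddCommGroup V] [Module k V]
    {m : ℕ} (ν : Fin m → V) (I : Finset (Fin m)) :
    Submodule k (ExteriorAlgebra k V) :=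
  LinearMap.range (LinearMap.mulRight k (wedgeOf ν I))

/-- `I(J)`: the ideal of the exterior algebra generated by the degree-one elements
`ν_j`, `j ∈ J`. -/
noncomputable def genIdeal {k V : Type*} [CommRing k] [AddCommGroup V] [Module k V]
    {m : ℕ} (ν : Fin m → V) (J : Finset (Fin m)) :
    Submodule k (ExteriorAlgebra k V) :=
  ⨆ j ∈ J, LinearMap.range (LinearMap.mulRight k (ExteriorAlgebra.ι k (ν j)))

/-- The differential of the Taylor-like complex: a signed sum of the inclusion maps
`Π_I ↪ Π_{I'}` for `I' ⊂ I`, `|I| = |I'| + 1`, with the standard simplicial sign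
`(-1)^{position of the extra element}`; at the bottom (`I' = ∅`) this is the
augmentation `⊕_j Π_{{j}} → I(J)`. -/
noncomputable def taylorD {k V : Type*} [CommRing k] [AddCommGroup V] [Module k V]
    {m : ℕ} (J : Finset (Fin m))
    (f : Finset (Fin m) → ExteriorAlgebra k V) :
    Finset (Fin m) → ExteriorAlgebra k V :=
  fun I' => ∑ x ∈ J \ I',
    ((-1 : ℤ) ^ ((I'.filter (· < x)).card)) • f (insert x I')

open Module Finset

section Cone

variable {ι M : Type*} [LinearOrder ι] [AddCommGroup M]

def coboundary (J : Finset ι) (c : Finset ι → M) (I : Finset ι) : M :=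
  ∑ x ∈ J \ I, ((-1 : ℤ) ^ #(I.filter (· < x))) • c (insert x I)

def cone (a : ι) (c : Finset ι → M) (I : Finset ι) : M :=
  if a ∈ I then c (I.erase a) else 0

theorem card_filter_lt_eq_zero {I : Finset ι} {a : ι} (h : ∀ y ∈ I, a ≤ y) :
    #(I.filter (· < a)) = 0 := by
  simpa [filter_eq_empty_iff] using h

theorem card_filter_lt_eq_card_erase_add_one {I : Finset ι} {a x : ι} (ha : a ∈ I)
    (hax : a < x) : #(I.filter (· < x)) = #((I.erase a).filter (· < x)) + 1 := by
  rw [filter_erase, card_erase_add_one (mem_filter.2 ⟨ha, hax⟩)]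

theorem coboundary_cone_add_cone_coboundary {J : Finset ι} {a : ι} (ha : a ∈ J)
    {c : Finset ι → M} (hc : ∀ I, c I ≠ 0 → ∀ x ∈ I, a ≤ x) (I : Finset ι) :
    coboundary J (cone a c) I + cone a (coboundary J c) I = c I := by
  -- `a` precedes every vertex it meets, so it contributes no sign, and for `x > a` removing `a`
  -- from `I` flips the sign at `x`.
  have sign_one : ∀ {I K}, I ⊆ K → ((-1 : ℤ) ^ #(I.filter (· < a))) • c K = c K := by
    intro I K hIK
    by_cases h0 : c K = 0
    · simp [h0]
    rw [card_filter_lt_eq_zero fun y hy => hc K h0 y (hIK hy), pow_zero, one_smul]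
  by_cases haI : a ∈ I
  · have hJ : J \ I.erase a = insert a (J \ I) := by
      ext x; by_cases hx : x = a <;> simp [hx, ha]
    have hterm : ∀ x ∈ J \ I, ((-1 : ℤ) ^ #(I.filter (· < x))) • cone a c (insert x I) =
        -(((-1 : ℤ) ^ #((I.erase a).filter (· < x))) • c (insert x (I.erase a))) := by
      intro x hx
      have hxa : x ≠ a := fun h => (mem_sdiff.1 hx).2 (h ▸ haI)
      rw [cone, if_pos (mem_insert_of_mem haI), erase_insert_of_ne hxa]
      by_cases h0 : c (insert x (I.erase a)) = 0
      · simp [h0]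
      have hax : a < x := lt_of_le_of_ne (hc _ h0 x (mem_insert_self x _)) (Ne.symm hxa)
      rw [card_filter_lt_eq_card_erase_add_one haI hax, pow_succ, mul_neg_one, neg_smul]
    rw [coboundary, sum_congr rfl hterm, sum_neg_distrib, cone, if_pos haI, coboundary, hJ,
      sum_insert (fun h => (mem_sdiff.1 h).2 haI), insert_erase haI,
      sign_one (erase_subset a I)]
    abel
  · have hterm : ∀ x ∈ J \ I, x ≠ a →
        ((-1 : ℤ) ^ #(I.filter (· < x))) • cone a c (insert x I) = 0 := by
      intro x _ hxa
      rw [cone, if_neg (by simp [Ne.symm hxa, haI]), smul_zero]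
    rw [coboundary, sum_eq_single_of_mem a (mem_sdiff.2 ⟨ha, haI⟩) hterm, cone,
      if_pos (mem_insert_self a I), erase_insert haI, sign_one subset_rfl, cone, if_neg haI,
      add_zero]

end Cone

section ExteriorBasis

variable {k V ι : Type*} [CommRing k] [AddCommGroup V] [Module k V] [LinearOrder ι]

theorem ExteriorAlgebra.basis_mul_basis_of_disjoint (b : Basis ι k V) {A B : Finset ι}
    (h : Disjoint A B) :
    ∃ σ : ℤˣ, b.ExteriorAlgebra A * b.ExteriorAlgebra B = σ • b.ExteriorAlgebra (A ∪ B) := by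
  have := basis_mul_of_disjoint b (Set.powersetCard.ofCard (rfl : #A = _))
    (Set.powersetCard.ofCard (rfl : #B = _)) h
  exact ⟨_, this.trans (by congr 2; exact disjUnion_eq_union A B h)⟩

theorem ExteriorAlgebra.basis_mul_basis_of_not_disjoint (b : Basis ι k V) {A B : Finset ι}
    (h : ¬ Disjoint A B) : b.ExteriorAlgebra A * b.ExteriorAlgebra B = 0 :=
  basis_mul_of_not_disjoint b (Set.powersetCard.ofCard (rfl : #A = _))
    (Set.powersetCard.ofCard (rfl : #B = _)) h

theorem ExteriorAlgebra.range_mulRight_basis (b : Basis ι k V) (I : Finset ι) :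
    LinearMap.range (LinearMap.mulRight k (b.ExteriorAlgebra I)) =
      Submodule.span k (b.ExteriorAlgebra '' {T | I ⊆ T}) := by
  rw [LinearMap.range_eq_map, ← b.ExteriorAlgebra.span_eq, Submodule.map_span]
  apply le_antisymm
  · rw [Submodule.span_le]
    rintro _ ⟨_, ⟨S, rfl⟩, rfl⟩
    rw [LinearMap.mulRight_apply]
    by_cases hSI : Disjoint S I
    · obtain ⟨σ, hσ⟩ := basis_mul_basis_of_disjoint b hSI
      rw [hσ, Units.smul_def]
      exact zsmul_mem (Submodule.subset_span (Set.mem_image_of_mem _ subset_union_right)) _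
    · rw [basis_mul_basis_of_not_disjoint b hSI]
      exact zero_mem _
  · rw [Submodule.span_le]
    rintro _ ⟨T, hIT, rfl⟩
    obtain ⟨σ, hσ⟩ := basis_mul_basis_of_disjoint b (sdiff_disjoint : Disjoint (T \ I) I)
    rw [sdiff_union_of_subset hIT] at hσ
    rw [← inv_smul_smul σ (b.ExteriorAlgebra T), ← hσ, Units.smul_def]
    exact zsmul_mem (Submodule.subset_span (Set.mem_image_of_mem _ (Set.mem_range_self _))) _

end ExteriorBasis

section Taylor

variable {k V : Type*} [CommRing k] [AddCommGroup V] [Module k V] {m : ℕ}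
  (b : Basis (Fin m) k V) (J : Finset (Fin m))

theorem wedgeOf_eq_basis (s : Finset (Fin m)) : wedgeOf (k := k) b s = b.ExteriorAlgebra s := by
  rw [ExteriorAlgebra.basis_apply_ofCard b rfl, ExteriorAlgebra.ιMulti_family,
    ExteriorAlgebra.ιMulti_apply, wedgeOf]
  congr 1
  apply List.ext_getElem <;>
    simp [Set.powersetCard.ofFinEmbEquiv_symm_apply, orderEmbOfFin_apply]

theorem mem_piIdeal_iff {I : Finset (Fin m)} {x : ExteriorAlgebra k V} :
    x ∈ PiIdeal b I ↔ ∀ T, b.ExteriorAlgebra.repr x T ≠ 0 → I ⊆ T := by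
  rw [PiIdeal, wedgeOf_eq_basis, ExteriorAlgebra.range_mulRight_basis, Basis.mem_span_image]
  simp [Set.subset_def]

theorem mem_genIdeal_iff {x : ExteriorAlgebra k V} :
    x ∈ genIdeal b J ↔ ∀ T, b.ExteriorAlgebra.repr x T ≠ 0 → (T ∩ J).Nonempty := by
  have hι : ∀ j, ExteriorAlgebra.ι k (b j) = b.ExteriorAlgebra {j} := fun j => by
    rw [← wedgeOf_eq_basis]; simp [wedgeOf]
  simp only [genIdeal, hι, ExteriorAlgebra.range_mulRight_basis, ← Submodule.span_iUnion₂,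
    ← Set.image_iUnion₂, Basis.mem_span_image]
  simp [Set.subset_def, Finset.Nonempty, and_comm]

theorem piIdeal_le_genIdeal {I : Finset (Fin m)} (hI : I.Nonempty) (hIJ : I ⊆ J) :
    PiIdeal (k := k) b I ≤ genIdeal b J := fun x hx => by
  rw [mem_genIdeal_iff]
  intro T hT
  obtain ⟨j, hj⟩ := hI
  exact ⟨j, mem_inter.2 ⟨(mem_piIdeal_iff b).1 hx T hT hj, hIJ hj⟩⟩

theorem taylorD_eq_coboundary (f : Finset (Fin m) → ExteriorAlgebra k V) :
    taylorD J f = coboundary J f :=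
  rfl

theorem repr_taylorD (f : Finset (Fin m) → ExteriorAlgebra k V) (I T : Finset (Fin m)) :
    b.ExteriorAlgebra.repr (taylorD J f I) T =
      coboundary J (fun I => b.ExteriorAlgebra.repr (f I) T) I := by
  simp only [taylorD_eq_coboundary, coboundary, map_sum, map_zsmul, Finsupp.finsetSum_apply,
    Finsupp.smul_apply]

noncomputable def coneHomotopy (f : Finset (Fin m) → ExteriorAlgebra k V) (I : Finset (Fin m)) :
    ExteriorAlgebra k V :=
  b.ExteriorAlgebra.equivFun.symm fun T =>
    if h : (T ∩ J).Nonempty then cone ((T ∩ J).min' h) (fun I => b.ExteriorAlgebra.repr (f I) T) I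
    else 0

variable {b J}

theorem repr_coneHomotopy (f : Finset (Fin m) → ExteriorAlgebra k V) (I T : Finset (Fin m)) :
    b.ExteriorAlgebra.repr (coneHomotopy b J f I) T =
      if h : (T ∩ J).Nonempty then
        cone ((T ∩ J).min' h) (fun I => b.ExteriorAlgebra.repr (f I) T) I
      else 0 := by
  rw [coneHomotopy, ← Basis.equivFun_apply, LinearEquiv.apply_symm_apply]

theorem coneHomotopy_zero : coneHomotopy b J (0 : Finset (Fin m) → ExteriorAlgebra k V) = 0 := by
  ext1 I
  refine b.ExteriorAlgebra.ext_elem fun T => ?_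
  simp [repr_coneHomotopy, cone]

theorem exists_of_repr_coneHomotopy_ne_zero {f : Finset (Fin m) → ExteriorAlgebra k V}
    {I T : Finset (Fin m)} (h : b.ExteriorAlgebra.repr (coneHomotopy b J f I) T ≠ 0) :
    ∃ a ∈ T ∩ J, a ∈ I ∧ b.ExteriorAlgebra.repr (f (I.erase a)) T ≠ 0 := by
  rw [repr_coneHomotopy] at h
  split_ifs at h with hT
  · unfold cone at h
    split_ifs at h with ha
    · exact ⟨_, min'_mem _ hT, ha, h⟩
    · exact absurd rfl h
  · exact absurd rfl h

theorem coneHomotopy_mem_piIdeal {f : Finset (Fin m) → ExteriorAlgebra k V}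
    (hf : ∀ I, f I ∈ PiIdeal b I) (I : Finset (Fin m)) :
    coneHomotopy b J f I ∈ PiIdeal b I := by
  rw [mem_piIdeal_iff]
  intro T hT
  obtain ⟨a, haTJ, haI, hfa⟩ := exists_of_repr_coneHomotopy_ne_zero hT
  rw [← insert_erase haI]
  exact insert_subset (mem_inter.1 haTJ).1 ((mem_piIdeal_iff b).1 (hf _) T hfa)

theorem coneHomotopy_support {f : Finset (Fin m) → ExteriorAlgebra k V} {i : ℕ}
    (hf : ∀ I, f I ≠ 0 → I ⊆ J ∧ #I = i) (I : Finset (Fin m))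
    (hI : coneHomotopy b J f I ≠ 0) : I ⊆ J ∧ #I = i + 1 := by
  obtain ⟨T, hT⟩ := Finsupp.ne_iff.1 ((LinearEquiv.map_ne_zero_iff b.ExteriorAlgebra.repr).2 hI)
  obtain ⟨a, haTJ, haI, hfa⟩ := exists_of_repr_coneHomotopy_ne_zero hT
  obtain ⟨hsub, hcard⟩ := hf (I.erase a) fun h => hfa (by simp [h])
  rw [← insert_erase haI, card_insert_of_notMem (notMem_erase a I), hcard]
  exact ⟨insert_subset (mem_inter.1 haTJ).2 hsub, rfl⟩

theorem taylorD_coneHomotopy_add_coneHomotopy_taylorD {f : Finset (Fin m) → ExteriorAlgebra k V}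
    (hpi : ∀ I, f I ∈ PiIdeal b I) (hgen : ∀ I, f I ∈ genIdeal b J)
    (hJ : ∀ I, f I ≠ 0 → I ⊆ J) (I : Finset (Fin m)) :
    taylorD J (coneHomotopy b J f) I + coneHomotopy b J (taylorD J f) I = f I := by
  refine b.ExteriorAlgebra.ext_elem fun T => ?_
  simp only [map_add, Finsupp.add_apply, repr_taylorD, repr_coneHomotopy]
  by_cases hT : (T ∩ J).Nonempty
  · simp only [dif_pos hT]
    refine coboundary_cone_add_cone_coboundary (mem_inter.1 (min'_mem _ hT)).2
      (fun I hI x hx => min'_le _ _ (mem_inter.2 ⟨?_, ?_⟩)) I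
    · exact (mem_piIdeal_iff b).1 (hpi I) T hI hx
    · exact hJ I (fun h => hI (by simp [h])) hx
  · simp only [dif_neg hT]
    have hfT : b.ExteriorAlgebra.repr (f I) T = 0 := by
      by_contra h
      exact hT ((mem_genIdeal_iff b J).1 (hgen I) T h)
    simp [hfT, coboundary]

theorem exists_taylorD_eq {f : Finset (Fin m) → ExteriorAlgebra k V} {i : ℕ}
    (hpi : ∀ I, f I ∈ PiIdeal b I) (hgen : ∀ I, f I ∈ genIdeal b J)
    (hsupp : ∀ I, f I ≠ 0 → I ⊆ J ∧ #I = i) (hcocycle : ∀ I, taylorD J f I = 0) :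
    ∃ g : Finset (Fin m) → ExteriorAlgebra k V, (∀ I, g I ∈ PiIdeal b I) ∧
      (∀ I, g I ≠ 0 → I ⊆ J ∧ #I = i + 1) ∧ taylorD J g = f := by
  refine ⟨coneHomotopy b J f, coneHomotopy_mem_piIdeal hpi, coneHomotopy_support hsupp,
    funext fun I => ?_⟩
  have h := taylorD_coneHomotopy_add_coneHomotopy_taylorD hpi hgen (fun I hI => (hsupp I hI).1) I
  rwa [show taylorD J f = 0 from funext hcocycle, coneHomotopy_zero, Pi.zero_apply, add_zero] at h

theorem exists_taylorD_empty_eq {z : ExteriorAlgebra k V} (hz : z ∈ genIdeal b J) :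
    ∃ g : Finset (Fin m) → ExteriorAlgebra k V, (∀ I, g I ∈ PiIdeal b I) ∧
      (∀ I, g I ≠ 0 → I ⊆ J ∧ #I = 1) ∧ taylorD J g ∅ = z := by
  obtain ⟨g, hpi, hsupp, hg⟩ := exists_taylorD_eq (b := b) (J := J) (i := 0)
    (f := fun I => if I = ∅ then z else 0)
    (fun I => by
      split_ifs with hI
      · exact (mem_piIdeal_iff b).2 fun T _ => hI ▸ empty_subset T
      · exact zero_mem _)
    (fun I => by
      split_ifs
      · exact hz
      · exact zero_mem _)
    (fun I hI => by
      split_ifs at hI with h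
      · simp [h]
      · exact absurd rfl hI)
    (fun I => by simp [taylorD_eq_coboundary, coboundary])
  exact ⟨g, hpi, hsupp, by rw [hg]; exact if_pos rfl⟩

end Taylor

/-- Cochains of grade `i` are encoded as functions `f` with `f I ∈ Π_I`, supported on subsets
`I ⊆ J` with `|I| = i`; the value of the differential at `∅` is the augmentation. -/
theorem taylor_complex_exact_general {k V : Type*} [CommRing k] [AddCommGroup V] [Module k V]
    {m : ℕ} (b : Module.Basis (Fin m) k V) (J : Finset (Fin m)) :
    -- exactness at `I(J)`: the augmentation is surjective
    (∀ z ∈ genIdeal (⇑b) J, ∃ f : Finset (Fin m) → ExteriorAlgebra k V,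
      (∀ I, f I ∈ PiIdeal (⇑b) I) ∧ (∀ I, f I ≠ 0 → I ⊆ J ∧ I.card = 1) ∧
      taylorD J f ∅ = z) ∧
    -- exactness at every `⊕_{|I| = i} Π_I`, `i ≥ 1`
    (∀ i : ℕ, 1 ≤ i → ∀ f : Finset (Fin m) → ExteriorAlgebra k V,
      (∀ I, f I ∈ PiIdeal (⇑b) I) → (∀ I, f I ≠ 0 → I ⊆ J ∧ I.card = i) →
      (∀ I', taylorD J f I' = 0) →
      ∃ g : Finset (Fin m) → ExteriorAlgebra k V,
        (∀ I, g I ∈ PiIdeal (⇑b) I) ∧ (∀ I, g I ≠ 0 → I ⊆ J ∧ I.card = i + 1) ∧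
        taylorD J g = f) := by
  refine ⟨fun z hz => exists_taylorD_empty_eq hz, fun i hi f hpi hsupp hcocycle => ?_⟩
  have hgen : ∀ I, f I ∈ genIdeal b J := fun I => by
    by_cases hI : f I = 0
    · rw [hI]; exact zero_mem _
    obtain ⟨hIJ, hcard⟩ := hsupp I hI
    exact piIdeal_le_genIdeal b J (card_pos.1 (hcard ▸ hi)) hIJ (hpi I)
  exact exists_taylorD_eq hpi hgen hsupp hcocycle

/-- exactness of the Taylor-like complex
`0 ← I(J) ← ⊕_{|I|=1} Π_I ← ⊕_{|I|=2} Π_I ← ⋯` (for `I ⊆ J` nonempty). Cochains of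
grade `i` are encoded as functions `f` with `f I ∈ Π_I`, supported on subsets `I ⊆ J`
with `|I| = i`; the value of the differential at `∅` is the augmentation. -/
theorem taylor_complex_exact {k V : Type*} [CommRing k] [AddCommGroup V] [Module k V]
    {m : ℕ} (b : Module.Basis (Fin m) k V) (J : Finset (Fin m)) (hJ : J.Nonempty) :
    -- exactness at `I(J)`: the augmentation is surjective
    (∀ z ∈ genIdeal (⇑b) J, ∃ f : Finset (Fin m) → ExteriorAlgebra k V,
      (∀ I, f I ∈ PiIdeal (⇑b) I) ∧ (∀ I, f I ≠ 0 → I ⊆ J ∧ I.card = 1) ∧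
      taylorD J f ∅ = z) ∧
    -- exactness at every `⊕_{|I| = i} Π_I`, `i ≥ 1`
    (∀ i : ℕ, 1 ≤ i → ∀ f : Finset (Fin m) → ExteriorAlgebra k V,
      (∀ I, f I ∈ PiIdeal (⇑b) I) → (∀ I, f I ≠ 0 → I ⊆ J ∧ I.card = i) →
      (∀ I', taylorD J f I' = 0) →
      ∃ g : Finset (Fin m) → ExteriorAlgebra k V,
        (∀ I, g I ∈ PiIdeal (⇑b) I) ∧ (∀ I, g I ≠ 0 → I ⊆ J ∧ I.card = i + 1) ∧
        taylorD J g = f) :=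
  taylor_complex_exact_general b J
end
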